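/- Let $\varepsilon>0$ and on the unit triangle $\hat{T}=\{0<x_1<1,\,0<x_2<x_1\}$ define the vector field $\mathbf{u}^\varepsilon(x_1,x_2) = \big((1-x_1)\,\partial_2 w^\varepsilon(x_2,0),\ w^\varepsilon(x_2,0)\big)^\top$ where $w^\varepsilon(x_2,0) = \min\{1, \varepsilon\log\log(e/x_2)\}$ for $x_2 \in (0,1)$. Then $\mathrm{div}\,\mathbf{u}^\varepsilon = 0$ in the distributional sense on $\hat{T}$, and the lowest-order Raviart–Thomas interpolant of $\mathbf{u}^\varepsilon$ on $\hat{T}$ equals the constant field $(0,1)^\top$; i.e., the edge fluxes of $\mathbf{u}^\varepsilon$ coincide with those of $(0,1)^\top$: $\int_{\hat{e}_i} \mathbf{u}^\varepsilon\cdot\mathbf{n}\,ds = \int_{\hat{e}_i} (0,1)^\top\cdot\mathbf{n}\,ds$ for each edge $\hat{e}_i$ of $\hat{T}$. -/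

import Mathlib

open MeasureTheory Set

/-- Reference triangle with vertices `(0,0)`, `(1,0)`, `(1,1)`. -/
def refTriangle : Set (ℝ × ℝ) := {x | 0 < x.1 ∧ x.1 < 1 ∧ 0 < x.2 ∧ x.2 < x.1}

/-- The boundary profile `w^ε(t) = min{1, ε log log(e/t)}` for `t > 0`,
extended by its continuous limit `1` for `t ≤ 0`. -/
noncomputable def wEps (ε : ℝ) (t : ℝ) : ℝ :=
  if t ≤ 0 then 1 else min 1 (ε * Real.log (Real.log (Real.exp 1 / t)))

/-- The counterexample field `u^ε(x₁,x₂) = ((1-x₁) ∂₂w^ε(x₂,0), w^ε(x₂,0))ᵀ`. -/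
noncomputable def uEps (ε : ℝ) (x : ℝ × ℝ) : ℝ × ℝ :=
  ((1 - x.1) * deriv (wEps ε) x.2, wEps ε x.2)

namespace Aux

noncomputable def gE (ε t : ℝ) : ℝ := ε * Real.log (1 - Real.log t)
noncomputable def gE' (ε t : ℝ) : ℝ := ε * (-t⁻¹ / (1 - Real.log t))
noncomputable def tC (ε : ℝ) : ℝ := Real.exp (1 - Real.exp ε⁻¹)

lemma tC_pos (ε : ℝ) : 0 < tC ε := Real.exp_pos _

lemma one_lt_exp_inv {ε : ℝ} (hε : 0 < ε) : (1:ℝ) < Real.exp ε⁻¹ := by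
  have := Real.exp_lt_exp.mpr (show (0:ℝ) < ε⁻¹ by positivity)
  rwa [Real.exp_zero] at this

lemma tC_lt_one {ε : ℝ} (hε : 0 < ε) : tC ε < 1 := by
  have h : 1 - Real.exp ε⁻¹ < 0 := by linarith [one_lt_exp_inv hε]
  calc tC ε < Real.exp 0 := Real.exp_lt_exp.mpr h
    _ = 1 := Real.exp_zero

lemma log_tC (ε : ℝ) : Real.log (tC ε) = 1 - Real.exp ε⁻¹ := Real.log_exp _

lemma wEps_eq_min {ε t : ℝ} (ht : 0 < t) : wEps ε t = min 1 (gE ε t) := by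
  rw [wEps, if_neg (not_le.mpr ht), gE, Real.log_div (Real.exp_ne_zero 1) ht.ne',
    Real.log_exp]

lemma one_le_gE {ε t : ℝ} (hε : 0 < ε) (ht0 : 0 < t) (ht : t ≤ tC ε) : 1 ≤ gE ε t := by
  have h1 : Real.log t ≤ 1 - Real.exp ε⁻¹ := by
    rw [← log_tC ε]; exact Real.log_le_log ht0 ht
  have h2 : Real.exp ε⁻¹ ≤ 1 - Real.log t := by linarith
  have h3 : ε⁻¹ ≤ Real.log (1 - Real.log t) :=
    (Real.le_log_iff_exp_le (lt_of_lt_of_le (Real.exp_pos _) h2)).mpr h2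
  have := mul_le_mul_of_nonneg_left h3 hε.le
  rw [mul_inv_cancel₀ hε.ne'] at this
  simpa [gE] using this

lemma wEps_eq_one {ε t : ℝ} (hε : 0 < ε) (ht : t ≤ tC ε) : wEps ε t = 1 := by
  rcases le_or_gt t 0 with h | h
  · simp [wEps, h]
  · rw [wEps_eq_min h, min_eq_left (one_le_gE hε h ht)]

lemma gE_le_one {ε t : ℝ} (hε : 0 < ε) (ht0 : 0 < t) (ht : tC ε ≤ t)
    (hte : t < Real.exp 1) : gE ε t ≤ 1 := by
  have h1 : 1 - Real.exp ε⁻¹ ≤ Real.log t := by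
    rw [← log_tC ε]; exact Real.log_le_log (tC_pos ε) ht
  have hlt : Real.log t < 1 := (Real.log_lt_iff_lt_exp ht0).mpr hte
  have h2 : Real.log (1 - Real.log t) ≤ ε⁻¹ := by
    rw [← Real.log_exp ε⁻¹]
    exact Real.log_le_log (by linarith) (by linarith)
  have := mul_le_mul_of_nonneg_left h2 hε.le
  rw [mul_inv_cancel₀ hε.ne'] at this
  simpa [gE] using this

lemma wEps_eq_gE {ε t : ℝ} (hε : 0 < ε) (ht0 : 0 < t) (ht : tC ε ≤ t)
    (hte : t < Real.exp 1) : wEps ε t = gE ε t := by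
  rw [wEps_eq_min ht0, min_eq_right (gE_le_one hε ht0 ht hte)]

lemma gE_tC {ε : ℝ} (hε : 0 < ε) : gE ε (tC ε) = 1 := by
  rw [gE, log_tC]
  rw [show 1 - (1 - Real.exp ε⁻¹) = Real.exp ε⁻¹ by ring, Real.log_exp,
    mul_inv_cancel₀ hε.ne']

lemma gE_one (ε : ℝ) : gE ε 1 = 0 := by simp [gE]

lemma hasDerivAt_gE {ε t : ℝ} (ht0 : 0 < t) (hte : t < Real.exp 1) :
    HasDerivAt (gE ε) (gE' ε t) t := by
  have hlt : Real.log t < 1 := (Real.log_lt_iff_lt_exp ht0).mpr hte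
  have h1 : HasDerivAt (fun t : ℝ => 1 - Real.log t) (-t⁻¹) t :=
    (Real.hasDerivAt_log ht0.ne').const_sub 1
  exact (h1.log (by linarith)).const_mul ε

lemma one_lt_exp_one : (1:ℝ) < Real.exp 1 := by
  rw [show (1:ℝ) = Real.exp 0 from by simp, Real.exp_lt_exp]
  norm_num [Real.exp_zero]

lemma wEps_hasDerivAt {ε t : ℝ} (hε : 0 < ε) (ht : tC ε < t) (hte : t < Real.exp 1) :
    HasDerivAt (wEps ε) (gE' ε t) t := by
  have h : ∀ s ∈ Ioo (tC ε) (Real.exp 1), wEps ε s = gE ε s := fun s hs =>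
    wEps_eq_gE hε ((tC_pos ε).trans hs.1) hs.1.le hs.2
  have hev : wEps ε =ᶠ[nhds t] gE ε :=
    Filter.eventuallyEq_of_mem (Ioo_mem_nhds ht hte) h
  exact (hasDerivAt_gE ((tC_pos ε).trans ht) hte).congr_of_eventuallyEq hev

lemma deriv_wEps_eq {ε t : ℝ} (hε : 0 < ε) (ht : tC ε < t) (hte : t < Real.exp 1) :
    deriv (wEps ε) t = gE' ε t := (wEps_hasDerivAt hε ht hte).deriv

lemma deriv_wEps_zero {ε t : ℝ} (hε : 0 < ε) (ht : t < tC ε) : deriv (wEps ε) t = 0 := by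
  have hev : wEps ε =ᶠ[nhds t] (fun _ => (1:ℝ)) :=
    Filter.eventuallyEq_of_mem (Iio_mem_nhds ht) (fun s hs => wEps_eq_one hε (le_of_lt hs))
  rw [hev.deriv_eq, deriv_const]

lemma deriv_wEps_tC {ε : ℝ} (hε : 0 < ε) : deriv (wEps ε) (tC ε) = 0 := by
  by_cases h : DifferentiableAt ℝ (wEps ε) (tC ε)
  · exact (uniqueDiffOn_Iic _ _ Set.self_mem_Iic).eq_deriv _ h.hasDerivAt.hasDerivWithinAt <|
      (hasDerivWithinAt_const _ _ 1).congr_of_mem (fun s hs => wEps_eq_one hε hs)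
        Set.self_mem_Iic
  · simp [deriv_zero_of_not_differentiableAt h]

lemma deriv_wEps_zero' {ε t : ℝ} (hε : 0 < ε) (ht : t ≤ tC ε) : deriv (wEps ε) t = 0 := by
  rcases eq_or_lt_of_le ht with rfl | h
  · exact deriv_wEps_tC hε
  · exact deriv_wEps_zero hε h

lemma measurable_wEps (ε : ℝ) : Measurable (wEps ε) := by
  unfold wEps
  refine Measurable.ite (measurableSet_Iic (a := (0:ℝ))) measurable_const ?_
  exact measurable_const.min <| measurable_const.mul <|
    Real.measurable_log.comp <| Real.measurable_log.comp <|
      measurable_const.div measurable_id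

lemma continuousOn_gE' {ε : ℝ} : ContinuousOn (gE' ε) (Icc (tC ε) 1) := by
  intro t ht
  have ht0 : 0 < t := lt_of_lt_of_le (tC_pos ε) ht.1
  have hlt : Real.log t < 1 := (Real.log_lt_iff_lt_exp ht0).mpr
    (lt_of_le_of_lt ht.2 one_lt_exp_one)
  apply ContinuousAt.continuousWithinAt
  apply ContinuousAt.mul continuousAt_const
  apply ContinuousAt.div
  · exact (continuousAt_id.inv₀ ht0.ne').neg
  · exact continuousAt_const.sub (Real.continuousAt_log ht0.ne')
  · linarith

lemma continuousOn_gE {ε : ℝ} : ContinuousOn (gE ε) (Icc (tC ε) 1) := by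
  intro t ht
  have ht0 : 0 < t := lt_of_lt_of_le (tC_pos ε) ht.1
  have hlt : Real.log t < 1 := (Real.log_lt_iff_lt_exp ht0).mpr
    (lt_of_le_of_lt ht.2 one_lt_exp_one)
  exact (ContinuousAt.mul continuousAt_const <|
    (Real.continuousAt_log (by show (1:ℝ) - Real.log t ≠ 0; linarith)).comp
      (continuousAt_const.sub (Real.continuousAt_log ht0.ne'))).continuousWithinAt

lemma abs_deriv_wEps_le {ε δ t : ℝ} (hε : 0 < ε) (hδ : 0 < δ) (ht : t ∈ Icc δ 1) :
    |deriv (wEps ε) t| ≤ ε / δ := by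
  rcases le_or_gt t (tC ε) with h | h
  · rw [deriv_wEps_zero' hε h]; simp; positivity
  · have ht0 : 0 < t := hδ.trans_le ht.1
    have hte : t < Real.exp 1 := lt_of_le_of_lt ht.2 one_lt_exp_one
    have hlog : Real.log t ≤ 0 := Real.log_nonpos ht0.le ht.2
    rw [deriv_wEps_eq hε h hte, gE']
    have h1 : (0:ℝ) < 1 - Real.log t := by linarith
    rw [abs_mul, abs_of_pos hε, abs_div, abs_neg, abs_inv, abs_of_pos ht0,
      abs_of_pos h1]
    have h2 : t⁻¹ ≤ δ⁻¹ := by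
      gcongr; exact ht.1
    have h3 : t⁻¹ / (1 - Real.log t) ≤ t⁻¹ :=
      div_le_self (by positivity) (by linarith)
    calc ε * (t⁻¹ / (1 - Real.log t)) ≤ ε * δ⁻¹ :=
          mul_le_mul_of_nonneg_left (h3.trans h2) hε.le
      _ = ε / δ := (div_eq_mul_inv ε δ).symm


lemma II_congr {f g : ℝ → ℝ} {a b : ℝ} (h : ∀ t ∈ Set.uIcc a b, f t = g t)
    (hg : IntervalIntegrable g volume a b) : IntervalIntegrable f volume a b := by
  rw [intervalIntegrable_iff] at hg ⊢
  exact hg.congr_fun (fun t ht => (h t (uIoc_subset_uIcc ht)).symm) measurableSet_uIoc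

lemma edge3 {ε : ℝ} (hε : 0 < ε) :
    ∫ t in (0:ℝ)..1, (-((1 - t) * deriv (wEps ε) t) + wEps ε t) = 1 := by
  set f' : ℝ → ℝ := fun t => -((1 - t) * deriv (wEps ε) t) + wEps ε t with hf'
  have htc0 : (0:ℝ) < tC ε := tC_pos ε
  have htc1 : tC ε < 1 := tC_lt_one hε
  -- on [0, tC] the integrand is 1
  have heq1 : ∀ t ∈ Set.uIcc (0:ℝ) (tC ε), f' t = 1 := by
    intro t ht
    rw [Set.uIcc_of_le htc0.le] at ht
    rw [hf']
    simp only
    rw [deriv_wEps_zero' hε ht.2, wEps_eq_one hε ht.2]; ring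
  have h1 : ∫ t in (0:ℝ)..(tC ε), f' t = tC ε := by
    rw [intervalIntegral.integral_congr heq1]; simp
  -- continuous model for f' on [tC, 1]
  set h : ℝ → ℝ := fun t => -((1 - t) * gE' ε t) + gE ε t with hh
  have hconth : ContinuousOn h (Icc (tC ε) 1) :=
    (((continuousOn_const.sub continuousOn_id).mul continuousOn_gE').neg).add continuousOn_gE
  have heq2 : ∀ t ∈ Set.Ioc (tC ε) 1, f' t = h t := by
    intro t ht
    have hte : t < Real.exp 1 := lt_of_le_of_lt ht.2 one_lt_exp_one
    rw [hf', hh]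
    simp only
    rw [deriv_wEps_eq hε ht.1 hte,
      wEps_eq_gE hε (htc0.trans ht.1) ht.1.le hte]
  have hinth : IntervalIntegrable h volume (tC ε) 1 :=
    (hconth.intervalIntegrable_of_Icc htc1.le)
  have hintf' : IntervalIntegrable f' volume (tC ε) 1 := by
    rw [intervalIntegrable_iff_integrableOn_Ioc_of_le htc1.le]
    exact ((intervalIntegrable_iff_integrableOn_Ioc_of_le htc1.le).mp hinth).congr_fun
      (fun t ht => (heq2 t ht).symm) measurableSet_Ioc
  -- FTC on [tC, 1]
  have h2 : ∫ t in (tC ε)..1, f' t = 1 - tC ε := by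
    set F : ℝ → ℝ := fun t => (t - 1) * wEps ε t with hF
    have hcont : ContinuousOn F (Icc (tC ε) 1) := by
      apply ContinuousOn.congr (f := fun t => (id t - 1) * gE ε t) ((continuousOn_id.sub continuousOn_const).mul continuousOn_gE)
      intro t ht
      rw [hF]
      simp only [id]
      rw [wEps_eq_gE hε (htc0.trans_le ht.1) ht.1 (lt_of_le_of_lt ht.2 one_lt_exp_one)]
    have hderiv : ∀ x ∈ Ioo (tC ε) 1, HasDerivWithinAt F (f' x) (Ioi x) x := by
      intro x hx
      have hte : x < Real.exp 1 := hx.2.trans one_lt_exp_one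
      have hd : HasDerivAt F (1 * wEps ε x + (x - 1) * gE' ε x) x :=
        ((hasDerivAt_id x).sub_const 1).mul (wEps_hasDerivAt hε hx.1 hte)
      have : f' x = 1 * wEps ε x + (x - 1) * gE' ε x := by
        rw [hf']
        simp only
        rw [deriv_wEps_eq hε hx.1 hte]; ring
      rw [this]
      exact hd.hasDerivWithinAt
    have := intervalIntegral.integral_eq_sub_of_hasDeriv_right_of_le htc1.le hcont hderiv hintf'
    rw [this, hF]
    simp only
    rw [wEps_eq_one hε le_rfl]; ring
  have hint1 : IntervalIntegrable f' volume 0 (tC ε) :=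
    II_congr heq1 intervalIntegrable_const
  rw [← intervalIntegral.integral_add_adjacent_intervals hint1 hintf', h1, h2]; ring


lemma ibp_x1 {R : ℝ} (ψ : ℝ → ℝ) (hψ : Differentiable ℝ ψ)
    (hψ' : Continuous (deriv ψ)) (hsupp : Function.support ψ ⊆ Icc (-R) R) :
    ∫ s, (1 - s) * deriv ψ s = ∫ s, ψ s := by
  have hIcc : Icc (-R) R ⊆ Ioc (-(R + 1)) (R + 1) := fun t ht =>
    ⟨by linarith [ht.1], by linarith [ht.2]⟩
  have htsupp : tsupport ψ ⊆ Icc (-R) R := closure_minimal hsupp isClosed_Icc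
  have hs1 : Function.support (fun s => (1 - s) * deriv ψ s) ⊆ Ioc (-(R + 1)) (R + 1) := by
    intro t ht
    exact hIcc (htsupp (support_deriv_subset (Function.mem_support.mpr
      (right_ne_zero_of_mul ht))))
  have hs2 : Function.support ψ ⊆ Ioc (-(R + 1)) (R + 1) := fun t ht => hIcc (hsupp ht)
  rw [← intervalIntegral.integral_eq_integral_of_support_subset hs1,
    ← intervalIntegral.integral_eq_integral_of_support_subset hs2]
  have hψa : ψ (-(R + 1)) = 0 := by
    by_contra h
    have := hsupp (Function.mem_support.mpr h)
    linarith [this.1]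
  have hψb : ψ (R + 1) = 0 := by
    by_contra h
    have := hsupp (Function.mem_support.mpr h)
    linarith [this.2]
  have hibp := intervalIntegral.integral_mul_deriv_eq_deriv_mul
    (a := -(R + 1)) (b := R + 1)
    (u := fun s => 1 - s) (u' := fun _ => -1) (v := ψ) (v' := deriv ψ)
    (fun x _ => (hasDerivAt_id x).const_sub 1)
    (fun x _ => (hψ x).hasDerivAt)
    intervalIntegrable_const (hψ'.intervalIntegrable _ _)
  rw [hibp, hψa, hψb]
  simp only [neg_one_mul]
  rw [intervalIntegral.integral_neg]
  ring

lemma ibp_x2 {ε a b : ℝ} (hε : 0 < ε) (ha : 0 < a) (hb : b < 1)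
    (ψ : ℝ → ℝ) (hψ : Differentiable ℝ ψ) (hψ' : Continuous (deriv ψ))
    (hsupp : Function.support ψ ⊆ Icc a b) :
    ∫ t, wEps ε t * deriv ψ t = - ∫ t, deriv (wEps ε) t * ψ t := by
  have htc0 : (0:ℝ) < tC ε := tC_pos ε
  have htc1 : tC ε < 1 := tC_lt_one hε
  have htsupp : tsupport ψ ⊆ Icc a b := closure_minimal hsupp isClosed_Icc
  have hIcc : Icc a b ⊆ Ioc 0 1 := fun t ht => ⟨ha.trans_le ht.1, ht.2.trans hb.le⟩
  have hψ0 : ψ 0 = 0 := by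
    by_contra h; have := hsupp (Function.mem_support.mpr h); linarith [this.1]
  have hψ1 : ψ 1 = 0 := by
    by_contra h; have := hsupp (Function.mem_support.mpr h); linarith [this.2]
  have hψtc : ψ (tC ε) = ψ (tC ε) := rfl
  have hs1 : Function.support (fun t => wEps ε t * deriv ψ t) ⊆ Ioc 0 1 := fun t ht =>
    hIcc (htsupp (support_deriv_subset (Function.mem_support.mpr (right_ne_zero_of_mul ht))))
  have hs2 : Function.support (fun t => deriv (wEps ε) t * ψ t) ⊆ Ioc 0 1 := fun t ht =>
    hIcc (hsupp (Function.mem_support.mpr (right_ne_zero_of_mul ht)))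
  rw [← intervalIntegral.integral_eq_integral_of_support_subset hs1,
    ← intervalIntegral.integral_eq_integral_of_support_subset hs2]
  -- LHS pieces
  have heqL1 : ∀ t ∈ Set.uIcc (0:ℝ) (tC ε), wEps ε t * deriv ψ t = deriv ψ t := by
    intro t ht
    rw [Set.uIcc_of_le htc0.le] at ht
    rw [wEps_eq_one hε ht.2, one_mul]
  have hL1 : ∫ t in (0:ℝ)..(tC ε), wEps ε t * deriv ψ t = ψ (tC ε) - ψ 0 := by
    rw [intervalIntegral.integral_congr heqL1]
    exact intervalIntegral.integral_deriv_eq_sub (fun x _ => hψ x)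
      (hψ'.intervalIntegrable _ _)
  have heqL2 : ∀ t ∈ Set.uIcc (tC ε) 1, wEps ε t * deriv ψ t = gE ε t * deriv ψ t := by
    intro t ht
    rw [Set.uIcc_of_le htc1.le] at ht
    rw [wEps_eq_gE hε (htc0.trans_le ht.1) ht.1 (lt_of_le_of_lt ht.2 one_lt_exp_one)]
  have hIIgE' : IntervalIntegrable (gE' ε) volume (tC ε) 1 :=
    continuousOn_gE'.intervalIntegrable_of_Icc htc1.le
  have hL2 : ∫ t in (tC ε)..1, wEps ε t * deriv ψ t
      = - ψ (tC ε) - ∫ t in (tC ε)..1, gE' ε t * ψ t := by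
    rw [intervalIntegral.integral_congr heqL2]
    have := intervalIntegral.integral_mul_deriv_eq_deriv_mul
      (a := tC ε) (b := 1) (u := gE ε) (u' := gE' ε) (v := ψ) (v' := deriv ψ)
      (fun x hx => by
        rw [Set.uIcc_of_le htc1.le] at hx
        exact hasDerivAt_gE (htc0.trans_le hx.1) (lt_of_le_of_lt hx.2 one_lt_exp_one))
      (fun x _ => (hψ x).hasDerivAt)
      hIIgE' (hψ'.intervalIntegrable _ _)
    rw [this, gE_one, gE_tC hε, hψ1]
    ring
  -- integrability of LHS pieces
  have hII1 : IntervalIntegrable (fun t => wEps ε t * deriv ψ t) volume 0 (tC ε) :=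
    II_congr heqL1 (hψ'.intervalIntegrable _ _)
  have hII2 : IntervalIntegrable (fun t => wEps ε t * deriv ψ t) volume (tC ε) 1 :=
    II_congr heqL2 ((continuousOn_gE.mul (hψ'.continuousOn)).intervalIntegrable_of_Icc htc1.le)
  -- RHS pieces
  have heqR1 : ∀ t ∈ Set.uIcc (0:ℝ) (tC ε), deriv (wEps ε) t * ψ t = 0 := by
    intro t ht
    rw [Set.uIcc_of_le htc0.le] at ht
    rw [deriv_wEps_zero' hε ht.2, zero_mul]
  have hR1 : ∫ t in (0:ℝ)..(tC ε), deriv (wEps ε) t * ψ t = 0 := by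
    rw [intervalIntegral.integral_congr heqR1]; simp
  have heqR2 : ∀ t ∈ Set.Ioc (tC ε) 1, deriv (wEps ε) t * ψ t = gE' ε t * ψ t := by
    intro t ht
    rw [deriv_wEps_eq hε ht.1 (lt_of_le_of_lt ht.2 one_lt_exp_one)]
  have hR2 : ∫ t in (tC ε)..1, deriv (wEps ε) t * ψ t
      = ∫ t in (tC ε)..1, gE' ε t * ψ t := by
    rw [intervalIntegral.integral_of_le htc1.le, intervalIntegral.integral_of_le htc1.le]
    exact setIntegral_congr_fun measurableSet_Ioc heqR2
  have hIIR1 : IntervalIntegrable (fun t => deriv (wEps ε) t * ψ t) volume 0 (tC ε) :=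
    II_congr heqR1 intervalIntegrable_const
  have hIIR2 : IntervalIntegrable (fun t => deriv (wEps ε) t * ψ t) volume (tC ε) 1 := by
    rw [intervalIntegrable_iff_integrableOn_Ioc_of_le htc1.le]
    have hg : IntervalIntegrable (fun t => gE' ε t * ψ t) volume (tC ε) 1 :=
      hIIgE'.mul_continuousOn hψ.continuous.continuousOn
    exact ((intervalIntegrable_iff_integrableOn_Ioc_of_le htc1.le).mp hg).congr_fun
      (fun t ht => (heqR2 t ht).symm) measurableSet_Ioc
  rw [← intervalIntegral.integral_add_adjacent_intervals hII1 hII2,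
    ← intervalIntegral.integral_add_adjacent_intervals hIIR1 hIIR2,
    hL1, hL2, hR1, hR2, hψ0]
  ring


lemma wEps_nonneg {ε t : ℝ} (hε : 0 < ε) (ht : t ≤ 1) : 0 ≤ wEps ε t := by
  rcases le_or_gt t 0 with h | h
  · simp [wEps, h]
  · rw [wEps_eq_min h]
    refine le_min zero_le_one ?_
    have hlog : Real.log t ≤ 0 := Real.log_nonpos h.le ht
    exact mul_nonneg hε.le (Real.log_nonneg (by linarith))

lemma wEps_le_one (ε t : ℝ) : wEps ε t ≤ 1 := by
  rcases le_or_gt t 0 with h | h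
  · simp [wEps, h]
  · rw [wEps_eq_min h]; exact min_le_left _ _

lemma abs_wEps_le_one {ε t : ℝ} (hε : 0 < ε) (ht : t ≤ 1) : |wEps ε t| ≤ 1 :=
  abs_le.mpr ⟨by linarith [wEps_nonneg hε ht], wEps_le_one ε t⟩

lemma integrable_of_bound {f : ℝ × ℝ → ℝ} {K : Set (ℝ × ℝ)} (hK : IsCompact K)
    (hf : AEStronglyMeasurable f volume) (C : ℝ)
    (hbd : ∀ x ∈ K, |f x| ≤ C) (hz : ∀ x ∉ K, f x = 0) : Integrable f volume := by
  apply Integrable.mono' (g := K.indicator fun _ => C)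
  · exact (integrable_indicator_iff hK.measurableSet).mpr
      (integrableOn_const hK.measure_lt_top.ne)
  · exact hf
  · filter_upwards with x
    by_cases hx : x ∈ K
    · rw [indicator_of_mem hx, Real.norm_eq_abs]; exact hbd x hx
    · rw [indicator_of_notMem hx, hz x hx]; simp

lemma slice1 {φ : ℝ × ℝ → ℝ} (hφ : ContDiff ℝ (⊤ : ℕ∞) φ) (x₁ x₂ : ℝ) :
    HasDerivAt (fun s => φ (s, x₂)) (fderiv ℝ φ (x₁, x₂) (1, 0)) x₁ :=
  (hφ.differentiable (by simp) (x₁, x₂)).hasFDerivAt.comp_hasDerivAt x₁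
    ((hasDerivAt_id x₁).prodMk (hasDerivAt_const x₁ x₂))

lemma slice2 {φ : ℝ × ℝ → ℝ} (hφ : ContDiff ℝ (⊤ : ℕ∞) φ) (x₁ x₂ : ℝ) :
    HasDerivAt (fun t => φ (x₁, t)) (fderiv ℝ φ (x₁, x₂) (0, 1)) x₂ :=
  (hφ.differentiable (by simp) (x₁, x₂)).hasFDerivAt.comp_hasDerivAt x₂
    ((hasDerivAt_const x₂ x₁).prodMk (hasDerivAt_id x₂))


lemma divergence_free {ε : ℝ} (hε : 0 < ε) (φ : ℝ × ℝ → ℝ) (hφ1 : ContDiff ℝ (⊤ : ℕ∞) φ)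
    (hφ2 : HasCompactSupport φ) (hφ3 : tsupport φ ⊆ refTriangle) :
    (∫ x in refTriangle,
        ((1 - x.1) * deriv (wEps ε) x.2 * fderiv ℝ φ x (1, 0)
          + wEps ε x.2 * fderiv ℝ φ x (0, 1))) = 0 := by
  rcases (tsupport φ).eq_empty_or_nonempty with hemp | hne
  · have hzero : ∀ x : ℝ × ℝ, fderiv ℝ φ x = 0 := fun x =>
      Function.notMem_support.mp (fun h => by
        have h2 := support_fderiv_subset ℝ (f := φ) h
        rw [hemp] at h2; exact h2)
    simp [hzero]
  · have hK : IsCompact (tsupport φ) := hφ2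
    obtain ⟨p, hpK, hpmin⟩ := hK.exists_isMinOn hne continuous_snd.continuousOn
    obtain ⟨q, hqK, hqmax⟩ := hK.exists_isMaxOn hne continuous_snd.continuousOn
    have hm : 0 < p.2 := (hφ3 hpK).2.2.1
    have hM : q.2 < 1 := lt_trans (hφ3 hqK).2.2.2 (hφ3 hqK).2.1
    have hx2mem : ∀ x ∈ tsupport φ, x.2 ∈ Icc p.2 q.2 := fun x hx => ⟨hpmin hx, hqmax hx⟩
    obtain ⟨R, hRsub⟩ := (Metric.isBounded_iff_subset_closedBall 0).mp hK.isBounded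
    have hR : ∀ x ∈ tsupport φ, |x.1| ≤ R := by
      intro x hx
      have h1 := hRsub hx
      rw [Metric.mem_closedBall, dist_zero_right] at h1
      calc |x.1| = ‖x.1‖ := (Real.norm_eq_abs _).symm
        _ ≤ ‖x‖ := norm_fst_le x
        _ ≤ R := h1
    have hR0 : 0 ≤ R := le_trans (abs_nonneg _) (hR p hpK)
    have hCfd : Continuous (fderiv ℝ φ) := hφ1.continuous_fderiv (by simp)
    have hfd1 : Continuous fun x : ℝ × ℝ => fderiv ℝ φ x (1, 0) :=
      hCfd.clm_apply continuous_const
    have hfd2 : Continuous fun x : ℝ × ℝ => fderiv ℝ φ x (0, 1) :=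
      hCfd.clm_apply continuous_const
    obtain ⟨Cf, hCf⟩ := hK.exists_bound_of_continuousOn hCfd.continuousOn
    obtain ⟨Cp, hCp⟩ := hK.exists_bound_of_continuousOn hφ1.continuous.continuousOn
    have hCf0 : 0 ≤ Cf := le_trans (norm_nonneg _) (hCf p hpK)
    have hCp0 : 0 ≤ Cp := le_trans (norm_nonneg _) (hCp p hpK)
    have happ : ∀ (v : ℝ × ℝ), ‖v‖ ≤ 1 → ∀ x ∈ tsupport φ, |fderiv ℝ φ x v| ≤ Cf := by
      intro v hv x hx
      calc |fderiv ℝ φ x v| = ‖fderiv ℝ φ x v‖ := (Real.norm_eq_abs _).symm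
        _ ≤ ‖fderiv ℝ φ x‖ * ‖v‖ := ContinuousLinearMap.le_opNorm _ _
        _ ≤ Cf * 1 := mul_le_mul (hCf x hx) hv (norm_nonneg _) hCf0
        _ = Cf := mul_one _
    have hv1 : ‖((1:ℝ), (0:ℝ))‖ ≤ 1 := by
      rw [Prod.norm_def]; simp
    have hv2 : ‖((0:ℝ), (1:ℝ))‖ ≤ 1 := by
      rw [Prod.norm_def]; simp
    have hpφ : ∀ x ∈ tsupport φ, |φ x| ≤ Cp := fun x hx => by
      rw [← Real.norm_eq_abs]; exact hCp x hx
    have mdw : Measurable (deriv (wEps ε)) := measurable_deriv _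
    have hz1 : ∀ x ∉ tsupport φ, fderiv ℝ φ x = 0 := fun x hx =>
      Function.notMem_support.mp (fun h => hx (support_fderiv_subset ℝ h))
    have hzφ : ∀ x ∉ tsupport φ, φ x = 0 := fun x hx => image_eq_zero_of_notMem_tsupport hx
    -- integrability
    have hdwbd : ∀ x ∈ tsupport φ, |deriv (wEps ε) x.2| ≤ ε / p.2 := fun x hx =>
      abs_deriv_wEps_le hε hm ⟨(hx2mem x hx).1, le_trans (hx2mem x hx).2 hM.le⟩
    have intA : Integrable (fun x : ℝ × ℝ =>
        (1 - x.1) * deriv (wEps ε) x.2 * fderiv ℝ φ x (1, 0)) volume := by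
      refine integrable_of_bound hK ?_ ((1 + R) * (ε / p.2) * Cf) ?_ ?_
      · exact (((measurable_const.sub measurable_fst).mul (mdw.comp measurable_snd)).mul
          hfd1.measurable).aestronglyMeasurable
      · intro x hx
        have habs := abs_le.mp (hR x hx)
        have h1 : |1 - x.1| ≤ 1 + R := abs_le.mpr ⟨by linarith, by linarith⟩
        calc |(1 - x.1) * deriv (wEps ε) x.2 * fderiv ℝ φ x (1, 0)|
            = |1 - x.1| * |deriv (wEps ε) x.2| * |fderiv ℝ φ x (1, 0)| := by
              rw [abs_mul, abs_mul]
          _ ≤ (1 + R) * (ε / p.2) * Cf :=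
              mul_le_mul (mul_le_mul h1 (hdwbd x hx) (abs_nonneg _) (by linarith))
                (happ _ hv1 x hx) (abs_nonneg _)
                (mul_nonneg (by linarith) (by positivity))
      · intro x hx; rw [hz1 x hx]; simp
    have intB : Integrable (fun x : ℝ × ℝ => wEps ε x.2 * fderiv ℝ φ x (0, 1)) volume := by
      refine integrable_of_bound hK ?_ (1 * Cf) ?_ ?_
      · exact (((measurable_wEps ε).comp measurable_snd).mul
          hfd2.measurable).aestronglyMeasurable
      · intro x hx
        rw [abs_mul]
        exact mul_le_mul (abs_wEps_le_one hε (le_trans (hx2mem x hx).2 hM.le))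
          (happ _ hv2 x hx) (abs_nonneg _) zero_le_one
      · intro x hx; rw [hz1 x hx]; simp
    have intC : Integrable (fun x : ℝ × ℝ => deriv (wEps ε) x.2 * φ x) volume := by
      refine integrable_of_bound hK ?_ ((ε / p.2) * Cp) ?_ ?_
      · exact ((mdw.comp measurable_snd).mul hφ1.continuous.measurable).aestronglyMeasurable
      · intro x hx
        rw [abs_mul]
        exact mul_le_mul (hdwbd x hx) (hpφ x hx) (abs_nonneg _) (by positivity)
      · intro x hx; rw [hzφ x hx, mul_zero]
    -- extend to full space
    have hcompl : ∀ x ∉ refTriangle,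
        (1 - x.1) * deriv (wEps ε) x.2 * fderiv ℝ φ x (1, 0)
          + wEps ε x.2 * fderiv ℝ φ x (0, 1) = 0 := by
      intro x hx
      rw [hz1 x (fun h => hx (hφ3 h))]; simp
    rw [setIntegral_eq_integral_of_forall_compl_eq_zero hcompl, integral_add intA intB]
    -- Fubini for A
    have hprodA : Integrable (fun x : ℝ × ℝ =>
        (1 - x.1) * deriv (wEps ε) x.2 * fderiv ℝ φ x (1, 0)) (volume.prod volume) := intA
    have hprodB : Integrable (fun x : ℝ × ℝ =>
        wEps ε x.2 * fderiv ℝ φ x (0, 1)) (volume.prod volume) := by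
      exact intB
    have hprodC : Integrable (fun x : ℝ × ℝ =>
        deriv (wEps ε) x.2 * φ x) (volume.prod volume) := intC
    have hA : (∫ x : ℝ × ℝ, (1 - x.1) * deriv (wEps ε) x.2 * fderiv ℝ φ x (1, 0))
        = ∫ x₂ : ℝ, ∫ x₁ : ℝ, deriv (wEps ε) x₂ * φ (x₁, x₂) := by
      rw [Measure.volume_eq_prod, MeasureTheory.integral_prod_symm _ hprodA]
      refine integral_congr_ae (Filter.Eventually.of_forall fun x₂ => ?_)
      have hder : ∀ s, deriv (fun s' => φ (s', x₂)) s = fderiv ℝ φ (s, x₂) (1, 0) :=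
        fun s => (slice1 hφ1 s x₂).deriv
      have hψd : Differentiable ℝ (fun s => φ (s, x₂)) :=
        fun s => (slice1 hφ1 s x₂).differentiableAt
      have hψ'c : Continuous (deriv (fun s => φ (s, x₂))) := by
        rw [show deriv (fun s => φ (s, x₂)) = fun s => fderiv ℝ φ (s, x₂) (1, 0) from
          funext hder]
        exact (hCfd.comp (continuous_id.prodMk continuous_const)).clm_apply continuous_const
      have hψsupp : Function.support (fun s => φ (s, x₂)) ⊆ Icc (-R) R := fun s hs =>
        abs_le.mp (hR _ (subset_closure hs))
      calc (∫ x₁ : ℝ, (1 - (x₁, x₂).1) * deriv (wEps ε) (x₁, x₂).2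
              * fderiv ℝ φ (x₁, x₂) (1, 0))
          = ∫ s : ℝ, deriv (wEps ε) x₂ * ((1 - s) * deriv (fun s' => φ (s', x₂)) s) := by
            refine integral_congr_ae (Filter.Eventually.of_forall fun s => ?_)
            simp only
            rw [hder s]; ring
        _ = deriv (wEps ε) x₂ * ∫ s : ℝ, (1 - s) * deriv (fun s' => φ (s', x₂)) s :=
            integral_const_mul _ _
        _ = deriv (wEps ε) x₂ * ∫ s : ℝ, φ (s, x₂) := by
            rw [ibp_x1 _ hψd hψ'c hψsupp]
        _ = ∫ x₁ : ℝ, deriv (wEps ε) x₂ * φ (x₁, x₂) := (integral_const_mul _ _).symm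
    have hB : (∫ x : ℝ × ℝ, wEps ε x.2 * fderiv ℝ φ x (0, 1))
        = - ∫ x₁ : ℝ, ∫ x₂ : ℝ, deriv (wEps ε) x₂ * φ (x₁, x₂) := by
      rw [Measure.volume_eq_prod, MeasureTheory.integral_prod _ hprodB, ← integral_neg]
      refine integral_congr_ae (Filter.Eventually.of_forall fun x₁ => ?_)
      have hder : ∀ t, deriv (fun t' => φ (x₁, t')) t = fderiv ℝ φ (x₁, t) (0, 1) :=
        fun t => (slice2 hφ1 x₁ t).deriv
      have hψd : Differentiable ℝ (fun t => φ (x₁, t)) :=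
        fun t => (slice2 hφ1 x₁ t).differentiableAt
      have hψ'c : Continuous (deriv (fun t => φ (x₁, t))) := by
        rw [show deriv (fun t => φ (x₁, t)) = fun t => fderiv ℝ φ (x₁, t) (0, 1) from
          funext hder]
        exact (hCfd.comp (continuous_const.prodMk continuous_id)).clm_apply continuous_const
      have hψsupp : Function.support (fun t => φ (x₁, t)) ⊆ Icc p.2 q.2 := fun t ht =>
        hx2mem _ (subset_closure ht)
      calc (∫ x₂ : ℝ, wEps ε (x₁, x₂).2 * fderiv ℝ φ (x₁, x₂) (0, 1))
          = ∫ t : ℝ, wEps ε t * deriv (fun t' => φ (x₁, t')) t := by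
            refine integral_congr_ae (Filter.Eventually.of_forall fun t => ?_)
            simp only
            rw [hder t]
        _ = - ∫ t : ℝ, deriv (wEps ε) t * φ (x₁, t) := ibp_x2 hε hm hM _ hψd hψ'c hψsupp
    have hswap : (∫ x₂ : ℝ, ∫ x₁ : ℝ, deriv (wEps ε) x₂ * φ (x₁, x₂))
        = ∫ x₁ : ℝ, ∫ x₂ : ℝ, deriv (wEps ε) x₂ * φ (x₁, x₂) := by
      rw [← MeasureTheory.integral_prod_symm _ hprodC, ← MeasureTheory.integral_prod _ hprodC]
    rw [hA, hB, hswap]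
    ring

end Aux

/-- `div u^ε = 0` distributionally on `T̂`, and the lowest-order Raviart–Thomas
interpolant of `u^ε` on `T̂` equals the constant field `(0,1)ᵀ`: the edge fluxes
of `u^ε` over the three edges of `T̂` coincide with those of `(0,1)ᵀ`
(edge `ê₁ = {(t,0)}` with normal `(0,-1)`, `ê₂ = {(1,t)}` with normal `(1,0)`,
`ê₃ = {(t,t)}` with normal `(-1,1)/√2` and arclength `√2 dt`). -/


theorem stmt10 (ε : ℝ) (hε : 0 < ε) :
    (∀ φ : ℝ × ℝ → ℝ, ContDiff ℝ (⊤ : ℕ∞) φ → HasCompactSupport φ →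
      tsupport φ ⊆ refTriangle →
      (∫ x in refTriangle,
        ((uEps ε x).1 * fderiv ℝ φ x (1, 0) + (uEps ε x).2 * fderiv ℝ φ x (0, 1))) = 0) ∧
    (∫ t in (0:ℝ)..1, -(uEps ε (t, 0)).2) = (∫ t in (0:ℝ)..1, -(((0:ℝ), (1:ℝ)).2)) ∧
    (∫ t in (0:ℝ)..1, (uEps ε (1, t)).1) = (∫ t in (0:ℝ)..1, (((0:ℝ), (1:ℝ)).1)) ∧
    (∫ t in (0:ℝ)..1, (-(uEps ε (t, t)).1 + (uEps ε (t, t)).2)) =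
      (∫ t in (0:ℝ)..1, (-(((0:ℝ), (1:ℝ)).1) + (((0:ℝ), (1:ℝ)).2))) := by
  refine ⟨?_, ?_, ?_, ?_⟩
  · intro φ hφ1 hφ2 hφ3
    simpa only [uEps] using Aux.divergence_free hε φ hφ1 hφ2 hφ3
  · simp [uEps, wEps]
  · norm_num [uEps]
  · calc (∫ t in (0:ℝ)..1, (-(uEps ε (t, t)).1 + (uEps ε (t, t)).2))
        = ∫ t in (0:ℝ)..1, (-((1 - t) * deriv (wEps ε) t) + wEps ε t) := by
          simp [uEps]
      _ = 1 := Aux.edge3 hε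
      _ = ∫ t in (0:ℝ)..1, (-(((0:ℝ), (1:ℝ)).1) + (((0:ℝ), (1:ℝ)).2)) := by simp
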